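/- arXiv:1602.04530 — 2 statements merged into one kernel-verified Lean document; each statement's English description precedes it below -/
import Mathlib

section
/- If p ◁ S and g : ℕ → Bool is a total function compatible with p (i.e. g(n) = p(n) for all n ∈ dom(p)), then g is compatible with exactly one element of S. -/
/-- A condition: (the graph of) a finite partial function `ℕ ⇀ Bool`,
represented as a finite set of pairs. -/
abbrev Cond : Type := Finset (ℕ × Bool)

/-- `p` is (the graph of) a partial function. -/
def IsFunc (p : Cond) : Prop := ∀ x ∈ p, ∀ y ∈ p, x.1 = y.1 → x.2 = y.2

instance (p : Cond) : Decidable (IsFunc p) := by unfold IsFunc; exact inferInstance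

/-- The domain of a condition. -/
def condDom (p : Cond) : Finset ℕ := p.image Prod.fst

/-- `condExt p n b` is `p(n ↦ b) = p ∪ {(n, b)}`. -/
def condExt (p : Cond) (n : ℕ) (b : Bool) : Cond := insert (n, b) p

/-- The partition relation `p ◁ S`. -/
inductive Partn : Cond → Finset Cond → Prop
  | refl (p : Cond) : Partn p {p}
  | split (p : Cond) (n : ℕ) (S₀ S₁ : Finset Cond) :
      n ∉ condDom p → Partn (condExt p n false) S₀ → Partn (condExt p n true) S₁ →
      Partn p (S₀ ∪ S₁)

lemma partn_subset {p : Cond} {S : Finset Cond} (h : Partn p S) :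
    ∀ q ∈ S, p ⊆ q := by
  induction h with
  | refl p => intro q hq; simp at hq; subst hq; exact Finset.Subset.refl _
  | split p n S₀ S₁ hn h0 h1 ih0 ih1 =>
    intro q hq
    rcases Finset.mem_union.mp hq with h | h
    · exact fun x hx => ih0 q h (Finset.mem_insert_of_mem hx)
    · exact fun x hx => ih1 q h (Finset.mem_insert_of_mem hx)

theorem stmt2' (p : Cond) (S : Finset Cond) (g : ℕ → Bool)
    (hS : Partn p S) (hg : ∀ x ∈ p, g x.1 = x.2) :
    ∃! q : Cond, q ∈ S ∧ ∀ x ∈ q, g x.1 = x.2 := by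
  induction hS with
  | refl p =>
    refine ⟨p, ⟨Finset.mem_singleton_self p, hg⟩, ?_⟩
    rintro q ⟨hq, -⟩; exact Finset.mem_singleton.mp hq
  | split p n S₀ S₁ hn h0 h1 ih0 ih1 =>
    cases hb : g n with
    | false =>
      have hcompat : ∀ x ∈ condExt p n false, g x.1 = x.2 := by
        intro x hx
        rcases Finset.mem_insert.mp hx with h | h
        · subst h; exact hb
        · exact hg x h
      obtain ⟨q, ⟨hqS, hqg⟩, huniq⟩ := ih0 hcompat
      refine ⟨q, ⟨Finset.mem_union_left _ hqS, hqg⟩, ?_⟩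
      rintro r ⟨hrS, hrg⟩
      rcases Finset.mem_union.mp hrS with h | h
      · exact huniq r ⟨h, hrg⟩
      · exfalso
        have hm : (n, true) ∈ r := partn_subset h1 r h (Finset.mem_insert_self _ _)
        have := hrg _ hm
        simp [hb] at this
    | true =>
      have hcompat : ∀ x ∈ condExt p n true, g x.1 = x.2 := by
        intro x hx
        rcases Finset.mem_insert.mp hx with h | h
        · subst h; exact hb
        · exact hg x h
      obtain ⟨q, ⟨hqS, hqg⟩, huniq⟩ := ih1 hcompat
      refine ⟨q, ⟨Finset.mem_union_right _ hqS, hqg⟩, ?_⟩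
      rintro r ⟨hrS, hrg⟩
      rcases Finset.mem_union.mp hrS with h | h
      · exfalso
        have hm : (n, false) ∈ r := partn_subset h0 r h (Finset.mem_insert_self _ _)
        have := hrg _ hm
        simp [hb] at this
      · exact huniq r ⟨h, hrg⟩
/-- If `p ◁ S` and `g : ℕ → Bool` is compatible with `p` (agrees with `p` on
`dom p`), then `g` is compatible with exactly one element of `S`. -/
theorem stmt2 (p : Cond) (S : Finset Cond) (g : ℕ → Bool) (hp : IsFunc p)
    (hS : Partn p S) (hg : ∀ x ∈ p, g x.1 = x.2) :
    ∃! q : Cond, q ∈ S ∧ ∀ x ∈ q, g x.1 = x.2 := by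
  exact stmt2' p S g hS hg
end

section
/- If m ∉ dom(p), t →_{p(m↦0)} u and t →_{p(m↦1)} v, then either u = v and t →_p u, or t has the form E[f m̄] (the generic symbol applied to the numeral m in evaluation position). -/
/-- Terms of the untyped calculus, with a generic function symbol `gen` (the
symbol `f`), booleans, numerals built from `zero`/`suc`, pairs, λ, and the
recursors. -/
inductive Tm : Type
  | var : ℕ → Tm
  | lam : Tm → Tm
  | app : Tm → Tm → Tm
  | pair : Tm → Tm → Tm
  | fst : Tm → Tm
  | snd : Tm → Tm
  | zero : Tm
  | one : Tm
  | suc : Tm → Tm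
  | gen : Tm
  | rec0 : Tm → Tm
  | rec1 : Tm → Tm → Tm
  | rec2 : Tm → Tm → Tm → Tm
  | recN : Tm → Tm → Tm → Tm
  deriving DecidableEq

/-- The numeral `n̄ = Sⁿ 0`. -/
def numeral : ℕ → Tm
  | 0 => .zero
  | n + 1 => .suc (numeral n)

/-- Booleans as terms. -/
def ofBool : Bool → Tm
  | false => .zero
  | true => .one

/-- de Bruijn lifting of variables `≥ d`. -/
def lift (d : ℕ) : Tm → Tm
  | .var i => if i < d then .var i else .var (i + 1)
  | .lam t => .lam (lift (d + 1) t)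
  | .app t u => .app (lift d t) (lift d u)
  | .pair t u => .pair (lift d t) (lift d u)
  | .fst t => .fst (lift d t)
  | .snd t => .snd (lift d t)
  | .zero => .zero
  | .one => .one
  | .suc t => .suc (lift d t)
  | .gen => .gen
  | .rec0 C => .rec0 (lift (d + 1) C)
  | .rec1 C a => .rec1 (lift (d + 1) C) (lift d a)
  | .rec2 C a b => .rec2 (lift (d + 1) C) (lift d a) (lift d b)
  | .recN C a g => .recN (lift (d + 1) C) (lift d a) (lift d g)

/-- Capture-avoiding substitution `t[a/k]` (de Bruijn). -/
def subst : Tm → ℕ → Tm → Tm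
  | .var i, k, a => if i < k then .var i else if i = k then a else .var (i - 1)
  | .lam t, k, a => .lam (subst t (k + 1) (lift 0 a))
  | .app t u, k, a => .app (subst t k a) (subst u k a)
  | .pair t u, k, a => .pair (subst t k a) (subst u k a)
  | .fst t, k, a => .fst (subst t k a)
  | .snd t, k, a => .snd (subst t k a)
  | .zero, _, _ => .zero
  | .one, _, _ => .one
  | .suc t, k, a => .suc (subst t k a)
  | .gen, _, _ => .gen
  | .rec0 C, k, a => .rec0 (subst C (k + 1) (lift 0 a))
  | .rec1 C c, k, a => .rec1 (subst C (k + 1) (lift 0 a)) (subst c k a)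
  | .rec2 C c0 c1, k, a => .rec2 (subst C (k + 1) (lift 0 a)) (subst c0 k a) (subst c1 k a)
  | .recN C cz g, k, a => .recN (subst C (k + 1) (lift 0 a)) (subst cz k a) (subst g k a)

/-- The condition-free base reduction (β/ι). -/
inductive Step : Tm → Tm → Prop
  | beta (t a : Tm) : Step (.app (.lam t) a) (subst t 0 a)
  | fstPair (u v : Tm) : Step (.fst (.pair u v)) u
  | sndPair (u v : Tm) : Step (.snd (.pair u v)) v
  | rec1Zero (C c : Tm) : Step (.app (.rec1 C c) .zero) c
  | rec2Zero (C c0 c1 : Tm) : Step (.app (.rec2 C c0 c1) .zero) c0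
  | rec2One (C c0 c1 : Tm) : Step (.app (.rec2 C c0 c1) .one) c1
  | recNZero (C cz g : Tm) : Step (.app (.recN C cz g) .zero) cz
  | recNSuc (C cz g : Tm) (k : ℕ) :
      Step (.app (.recN C cz g) (.suc (numeral k)))
        (.app (.app g (numeral k)) (.app (.recN C cz g) (numeral k)))

/-- Evaluation contexts `E ::= [] | E u | E.1 | E.2 | S E | f E | rec … E`. -/
inductive Ctx : Type
  | hole : Ctx
  | appL : Ctx → Tm → Ctx
  | fst : Ctx → Ctx
  | snd : Ctx → Ctx
  | suc : Ctx → Ctx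
  | genApp : Ctx → Ctx
  | rec0Arg : Tm → Ctx → Ctx
  | rec1Arg : Tm → Tm → Ctx → Ctx
  | rec2Arg : Tm → Tm → Tm → Ctx → Ctx
  | recNArg : Tm → Tm → Tm → Ctx → Ctx

/-- Plugging a term into the hole of an evaluation context. -/
def Ctx.fill : Ctx → Tm → Tm
  | .hole, e => e
  | .appL E u, e => .app (E.fill e) u
  | .fst E, e => .fst (E.fill e)
  | .snd E, e => .snd (E.fill e)
  | .suc E, e => .suc (E.fill e)
  | .genApp E, e => .app .gen (E.fill e)
  | .rec0Arg C E, e => .app (.rec0 C) (E.fill e)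
  | .rec1Arg C a E, e => .app (.rec1 C a) (E.fill e)
  | .rec2Arg C a b E, e => .app (.rec2 C a b) (E.fill e)
  | .recNArg C cz g E, e => .app (.recN C cz g) (E.fill e)

/-- The condition-indexed one-step reduction `t →_p u`: generated by the base
reduction, the rule `f k̄ →_p p(k)` for `k ∈ dom p`, and closure under
evaluation contexts. -/
inductive Red (p : Cond) : Tm → Tm → Prop
  | base {t u : Tm} : Step t u → Red p t u
  | genRed {k : ℕ} {b : Bool} : (k, b) ∈ p → Red p (.app .gen (numeral k)) (ofBool b)
  | ctx {e e' : Tm} (E : Ctx) : Red p e e' → Red p (E.fill e) (E.fill e')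

/-- Multi-step reduction `t →*_p u`. -/
def Reds (p : Cond) : Tm → Tm → Prop := Relation.ReflTransGen (Red p)

section Aux

/-- A head redex: either a base-reducible term or `f k̄`. -/
def IsRedex (r : Tm) : Prop := (∃ s, Step r s) ∨ ∃ k, r = .app .gen (numeral k)

lemma numeral_inj : ∀ {a b : ℕ}, numeral a = numeral b → a = b
  | 0, 0, _ => rfl
  | a + 1, b + 1, h => by
      simp only [numeral, Tm.suc.injEq] at h
      exact congrArg (· + 1) (numeral_inj h)
  | 0, _ + 1, h => by simp [numeral] at h
  | _ + 1, 0, h => by simp [numeral] at h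

lemma redex_shape {r : Tm} (hr : IsRedex r) :
    (∃ a b, r = .app a b) ∨ (∃ a, r = .fst a) ∨ (∃ a, r = .snd a) := by
  rcases hr with ⟨s, hs⟩ | ⟨k, rfl⟩
  · cases hs <;> simp
  · exact .inl ⟨_, _, rfl⟩

lemma fill_shape {r : Tm} (hr : IsRedex r) (E : Ctx) :
    (∃ a b, E.fill r = .app a b) ∨ (∃ a, E.fill r = .fst a) ∨ (∃ a, E.fill r = .snd a) ∨
      (∃ a, E.fill r = .suc a) := by
  cases E
  case hole =>
    rcases redex_shape hr with ⟨a, b, h⟩ | ⟨a, h⟩ | ⟨a, h⟩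
    · exact .inl ⟨a, b, h⟩
    · exact .inr (.inl ⟨a, h⟩)
    · exact .inr (.inr (.inl ⟨a, h⟩))
  all_goals simp [Ctx.fill]

lemma fill_ne_numeral {r : Tm} (hr : IsRedex r) :
    ∀ (E : Ctx) (k : ℕ), E.fill r ≠ numeral k := by
  intro E
  induction E with
  | hole =>
    intro k h
    rcases redex_shape hr with ⟨a, b, rfl⟩ | ⟨a, rfl⟩ | ⟨a, rfl⟩ <;>
      cases k <;> simp [Ctx.fill, numeral] at h
  | suc E ih =>
    intro k h
    cases k with
    | zero => simp [Ctx.fill, numeral] at h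
    | succ j =>
      simp only [Ctx.fill, numeral, Tm.suc.injEq] at h
      exact ih j h
  | _ => intro k h; cases k <;> simp [Ctx.fill, numeral] at h

/-- A redex is never a proper subterm-in-evaluation-position of itself:
if a redex equals `E'.fill r'` with `r'` a redex, then `E' = hole`. -/
lemma redex_fill_hole {r r' : Tm} (hr : IsRedex r) (hr' : IsRedex r') :
    ∀ E' : Ctx, r = E'.fill r' → E' = .hole := by
  intro E' h
  cases E' with
  | hole => rfl
  | appL E₁ u =>
    exfalso
    have hsh := fill_shape hr' E₁
    have hnum := fill_ne_numeral hr' E₁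
    simp only [Ctx.fill] at h
    generalize E₁.fill r' = w at h hsh hnum
    subst h
    rcases hr with ⟨s, hs⟩ | ⟨k, hk⟩
    · cases hs <;> simp_all
    · injection hk with h1 h2
      subst h1
      simp at hsh
  | genApp E₁ =>
    exfalso
    have hsh := fill_shape hr' E₁
    have hnum := fill_ne_numeral hr' E₁
    simp only [Ctx.fill] at h
    generalize E₁.fill r' = w at h hsh hnum
    subst h
    rcases hr with ⟨s, hs⟩ | ⟨k, hk⟩
    · cases hs <;> simp_all
    · injection hk with h1 h2
      exact hnum _ h2
  | fst E₁ =>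
    exfalso
    have hsh := fill_shape hr' E₁
    simp only [Ctx.fill] at h
    generalize E₁.fill r' = w at h hsh
    subst h
    rcases hr with ⟨s, hs⟩ | ⟨k, hk⟩
    · cases hs <;> simp_all
    · simp at hk
  | snd E₁ =>
    exfalso
    have hsh := fill_shape hr' E₁
    simp only [Ctx.fill] at h
    generalize E₁.fill r' = w at h hsh
    subst h
    rcases hr with ⟨s, hs⟩ | ⟨k, hk⟩
    · cases hs <;> simp_all
    · simp at hk
  | suc E₁ =>
    exfalso
    have hsh := fill_shape hr' E₁
    simp only [Ctx.fill] at h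
    generalize E₁.fill r' = w at h hsh
    subst h
    rcases hr with ⟨s, hs⟩ | ⟨k, hk⟩
    · cases hs <;> simp_all
    · simp at hk
  | rec0Arg C E₁ =>
    exfalso
    have hsh := fill_shape hr' E₁
    simp only [Ctx.fill] at h
    generalize E₁.fill r' = w at h hsh
    subst h
    rcases hr with ⟨s, hs⟩ | ⟨k, hk⟩
    · cases hs <;> simp_all
    · simp at hk
  | rec1Arg C a E₁ =>
    exfalso
    have hsh := fill_shape hr' E₁
    simp only [Ctx.fill] at h
    generalize E₁.fill r' = w at h hsh
    subst h
    rcases hr with ⟨s, hs⟩ | ⟨k, hk⟩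
    · cases hs <;> simp_all
    · simp at hk
  | rec2Arg C a b E₁ =>
    exfalso
    have hsh := fill_shape hr' E₁
    simp only [Ctx.fill] at h
    generalize E₁.fill r' = w at h hsh
    subst h
    rcases hr with ⟨s, hs⟩ | ⟨k, hk⟩
    · cases hs <;> simp_all
    · simp at hk
  | recNArg C cz g E₁ =>
    exfalso
    have hsh := fill_shape hr' E₁
    have hnum := fill_ne_numeral hr' E₁
    simp only [Ctx.fill] at h
    generalize E₁.fill r' = w at h hsh hnum
    subst h
    rcases hr with ⟨s, hs⟩ | ⟨k, hk⟩
    · cases hs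
      case recNSuc k => exact hnum (k + 1) rfl
      all_goals simp_all
    · simp at hk

/-- Unique decomposition of a term into evaluation context and head redex. -/
lemma unique_decomp {r r' : Tm} (hr : IsRedex r) (hr' : IsRedex r') :
    ∀ E E' : Ctx, E.fill r = E'.fill r' → E = E' ∧ r = r' := by
  intro E
  induction E with
  | hole =>
    intro E' h
    have := redex_fill_hole hr hr' E' h
    subst this
    exact ⟨rfl, h⟩
  | appL E₁ u ih =>
    intro E' h
    cases E' with
    | hole =>
      have := redex_fill_hole hr' hr (.appL E₁ u) h.symm
      exact absurd this (by simp)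
    | appL E₁' u' =>
      simp only [Ctx.fill, Tm.app.injEq] at h
      obtain ⟨h1, h2⟩ := h
      obtain ⟨hE, hrr⟩ := ih E₁' h1
      subst hE; subst hrr; subst h2; exact ⟨rfl, rfl⟩
    | genApp E₁' =>
      exfalso
      simp only [Ctx.fill, Tm.app.injEq] at h
      rcases fill_shape hr E₁ with ⟨a, b, h'⟩ | ⟨a, h'⟩ | ⟨a, h'⟩ | ⟨a, h'⟩ <;> simp_all
    | rec0Arg C E₁' =>
      exfalso
      simp only [Ctx.fill, Tm.app.injEq] at h
      rcases fill_shape hr E₁ with ⟨a, b, h'⟩ | ⟨a, h'⟩ | ⟨a, h'⟩ | ⟨a, h'⟩ <;> simp_all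
    | rec1Arg C a E₁' =>
      exfalso
      simp only [Ctx.fill, Tm.app.injEq] at h
      rcases fill_shape hr E₁ with ⟨a', b', h'⟩ | ⟨a', h'⟩ | ⟨a', h'⟩ | ⟨a', h'⟩ <;> simp_all
    | rec2Arg C a b E₁' =>
      exfalso
      simp only [Ctx.fill, Tm.app.injEq] at h
      rcases fill_shape hr E₁ with ⟨a', b', h'⟩ | ⟨a', h'⟩ | ⟨a', h'⟩ | ⟨a', h'⟩ <;> simp_all
    | recNArg C cz g E₁' =>
      exfalso
      simp only [Ctx.fill, Tm.app.injEq] at h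
      rcases fill_shape hr E₁ with ⟨a', b', h'⟩ | ⟨a', h'⟩ | ⟨a', h'⟩ | ⟨a', h'⟩ <;> simp_all
    | _ => exact absurd h (by simp [Ctx.fill])
  | genApp E₁ ih =>
    intro E' h
    cases E' with
    | hole =>
      have := redex_fill_hole hr' hr (.genApp E₁) h.symm
      exact absurd this (by simp)
    | genApp E₁' =>
      simp only [Ctx.fill, Tm.app.injEq, true_and] at h
      obtain ⟨hE, hrr⟩ := ih E₁' h
      subst hE; subst hrr; exact ⟨rfl, rfl⟩
    | appL E₁' u' =>
      exfalso
      simp only [Ctx.fill, Tm.app.injEq] at h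
      rcases fill_shape hr' E₁' with ⟨a, b, h'⟩ | ⟨a, h'⟩ | ⟨a, h'⟩ | ⟨a, h'⟩ <;> simp_all
    | _ => first
      | exact absurd h (by simp [Ctx.fill])
      | (exfalso; simp only [Ctx.fill, Tm.app.injEq] at h; exact absurd h.1 (by simp))
  | fst E₁ ih =>
    intro E' h
    cases E' with
    | hole =>
      have := redex_fill_hole hr' hr (.fst E₁) h.symm
      exact absurd this (by simp)
    | fst E₁' =>
      simp only [Ctx.fill, Tm.fst.injEq] at h
      obtain ⟨hE, hrr⟩ := ih E₁' h
      subst hE; subst hrr; exact ⟨rfl, rfl⟩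
    | _ => exact absurd h (by simp [Ctx.fill])
  | snd E₁ ih =>
    intro E' h
    cases E' with
    | hole =>
      have := redex_fill_hole hr' hr (.snd E₁) h.symm
      exact absurd this (by simp)
    | snd E₁' =>
      simp only [Ctx.fill, Tm.snd.injEq] at h
      obtain ⟨hE, hrr⟩ := ih E₁' h
      subst hE; subst hrr; exact ⟨rfl, rfl⟩
    | _ => exact absurd h (by simp [Ctx.fill])
  | suc E₁ ih =>
    intro E' h
    cases E' with
    | hole =>
      have := redex_fill_hole hr' hr (.suc E₁) h.symm
      exact absurd this (by simp)
    | suc E₁' =>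
      simp only [Ctx.fill, Tm.suc.injEq] at h
      obtain ⟨hE, hrr⟩ := ih E₁' h
      subst hE; subst hrr; exact ⟨rfl, rfl⟩
    | _ => exact absurd h (by simp [Ctx.fill])
  | rec0Arg C E₁ ih =>
    intro E' h
    cases E' with
    | hole =>
      have := redex_fill_hole hr' hr (.rec0Arg C E₁) h.symm
      exact absurd this (by simp)
    | rec0Arg C' E₁' =>
      simp only [Ctx.fill, Tm.app.injEq, Tm.rec0.injEq] at h
      obtain ⟨hC, h2⟩ := h
      obtain ⟨hE, hrr⟩ := ih E₁' h2
      subst hC; subst hE; subst hrr; exact ⟨rfl, rfl⟩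
    | appL E₁' u' =>
      exfalso
      simp only [Ctx.fill, Tm.app.injEq] at h
      rcases fill_shape hr' E₁' with ⟨a, b, h'⟩ | ⟨a, h'⟩ | ⟨a, h'⟩ | ⟨a, h'⟩ <;> simp_all
    | _ => first
      | exact absurd h (by simp [Ctx.fill])
      | (exfalso; simp only [Ctx.fill, Tm.app.injEq] at h; exact absurd h.1 (by simp))
  | rec1Arg C a E₁ ih =>
    intro E' h
    cases E' with
    | hole =>
      have := redex_fill_hole hr' hr (.rec1Arg C a E₁) h.symm
      exact absurd this (by simp)
    | rec1Arg C' a' E₁' =>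
      simp only [Ctx.fill, Tm.app.injEq, Tm.rec1.injEq] at h
      obtain ⟨⟨hC, ha⟩, h2⟩ := h
      obtain ⟨hE, hrr⟩ := ih E₁' h2
      subst hC; subst ha; subst hE; subst hrr; exact ⟨rfl, rfl⟩
    | appL E₁' u' =>
      exfalso
      simp only [Ctx.fill, Tm.app.injEq] at h
      rcases fill_shape hr' E₁' with ⟨a', b', h'⟩ | ⟨a', h'⟩ | ⟨a', h'⟩ | ⟨a', h'⟩ <;> simp_all
    | _ => first
      | exact absurd h (by simp [Ctx.fill])
      | (exfalso; simp only [Ctx.fill, Tm.app.injEq] at h; exact absurd h.1 (by simp))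
  | rec2Arg C a b E₁ ih =>
    intro E' h
    cases E' with
    | hole =>
      have := redex_fill_hole hr' hr (.rec2Arg C a b E₁) h.symm
      exact absurd this (by simp)
    | rec2Arg C' a' b' E₁' =>
      simp only [Ctx.fill, Tm.app.injEq, Tm.rec2.injEq] at h
      obtain ⟨⟨hC, ha, hb⟩, h2⟩ := h
      obtain ⟨hE, hrr⟩ := ih E₁' h2
      subst hC; subst ha; subst hb; subst hE; subst hrr; exact ⟨rfl, rfl⟩
    | appL E₁' u' =>
      exfalso
      simp only [Ctx.fill, Tm.app.injEq] at h
      rcases fill_shape hr' E₁' with ⟨a', b', h'⟩ | ⟨a', h'⟩ | ⟨a', h'⟩ | ⟨a', h'⟩ <;> simp_all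
    | _ => first
      | exact absurd h (by simp [Ctx.fill])
      | (exfalso; simp only [Ctx.fill, Tm.app.injEq] at h; exact absurd h.1 (by simp))
  | recNArg C cz g E₁ ih =>
    intro E' h
    cases E' with
    | hole =>
      have := redex_fill_hole hr' hr (.recNArg C cz g E₁) h.symm
      exact absurd this (by simp)
    | recNArg C' cz' g' E₁' =>
      simp only [Ctx.fill, Tm.app.injEq, Tm.recN.injEq] at h
      obtain ⟨⟨hC, hcz, hg⟩, h2⟩ := h
      obtain ⟨hE, hrr⟩ := ih E₁' h2
      subst hC; subst hcz; subst hg; subst hE; subst hrr; exact ⟨rfl, rfl⟩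
    | appL E₁' u' =>
      exfalso
      simp only [Ctx.fill, Tm.app.injEq] at h
      rcases fill_shape hr' E₁' with ⟨a', b', h'⟩ | ⟨a', h'⟩ | ⟨a', h'⟩ | ⟨a', h'⟩ <;> simp_all
    | _ => first
      | exact absurd h (by simp [Ctx.fill])
      | (exfalso; simp only [Ctx.fill, Tm.app.injEq] at h; exact absurd h.1 (by simp))

/-- Determinism of the base reduction. -/
lemma step_det {t u v : Tm} (h1 : Step t u) (h2 : Step t v) : u = v := by
  cases h1 with
  | recNSuc C cz g k =>
    generalize numeral k = n at h2 ⊢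
    cases h2 <;> rfl
  | _ => cases h2 <;> rfl

/-- Composition of evaluation contexts. -/
def Ctx.comp : Ctx → Ctx → Ctx
  | .hole, F => F
  | .appL E u, F => .appL (E.comp F) u
  | .fst E, F => .fst (E.comp F)
  | .snd E, F => .snd (E.comp F)
  | .suc E, F => .suc (E.comp F)
  | .genApp E, F => .genApp (E.comp F)
  | .rec0Arg C E, F => .rec0Arg C (E.comp F)
  | .rec1Arg C a E, F => .rec1Arg C a (E.comp F)
  | .rec2Arg C a b E, F => .rec2Arg C a b (E.comp F)
  | .recNArg C cz g E, F => .recNArg C cz g (E.comp F)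

lemma fill_comp (E F : Ctx) (e : Tm) : (E.comp F).fill e = E.fill (F.fill e) := by
  induction E <;> simp_all [Ctx.comp, Ctx.fill]

/-- Any one-step reduction decomposes as a head redex in an evaluation context. -/
lemma red_decomp {q : Cond} {t u : Tm} (h : Red q t u) :
    ∃ (E : Ctx) (r s : Tm), t = E.fill r ∧ u = E.fill s ∧
      (Step r s ∨ ∃ k b, (k, b) ∈ q ∧ r = .app .gen (numeral k) ∧ s = ofBool b) := by
  induction h with
  | base hs => exact ⟨.hole, _, _, rfl, rfl, .inl hs⟩
  | genRed hkb => exact ⟨.hole, _, _, rfl, rfl, .inr ⟨_, _, hkb, rfl, rfl⟩⟩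
  | ctx E h ih =>
    obtain ⟨F, r, s, rfl, rfl, hh⟩ := ih
    exact ⟨E.comp F, r, s, (fill_comp E F r).symm, (fill_comp E F s).symm, hh⟩

end Aux

/-- If `m ∉ dom p`, `t →_{p(m↦0)} u` and `t →_{p(m↦1)} v`, then either `u = v`
and `t →_p u`, or `t` has the form `E[f m̄]`. -/
theorem stmt11 (p : Cond) (hp : IsFunc p) (m : ℕ) (hm : m ∉ condDom p) (t u v : Tm)
    (h0 : Red (condExt p m false) t u) (h1 : Red (condExt p m true) t v) :
    (u = v ∧ Red p t u) ∨ ∃ E : Ctx, t = E.fill (.app .gen (numeral m)) := by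
  obtain ⟨E, r, s, rfl, rfl, hh0⟩ := red_decomp h0
  obtain ⟨E', r', s', heq, rfl, hh1⟩ := red_decomp h1
  have hr : IsRedex r := by
    rcases hh0 with hs | ⟨k, b, _, rfl, _⟩
    · exact .inl ⟨_, hs⟩
    · exact .inr ⟨k, rfl⟩
  have hr' : IsRedex r' := by
    rcases hh1 with hs | ⟨k, b, _, rfl, _⟩
    · exact .inl ⟨_, hs⟩
    · exact .inr ⟨k, rfl⟩
  obtain ⟨hE, hrr⟩ := unique_decomp hr hr' E E' heq
  subst hE; subst hrr
  rcases hh0 with hs0 | ⟨k1, b1, hkb1, hr1, hs1'⟩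
  · rcases hh1 with hs1 | ⟨k2, b2, hkb2, hr2, hs2'⟩
    · rw [step_det hs0 hs1]
      exact .inl ⟨rfl, Red.ctx E (Red.base hs1)⟩
    · subst hr2
      exact absurd hs0 (by intro h; cases h)
  · rcases hh1 with hs1 | ⟨k2, b2, hkb2, hr2, hs2'⟩
    · subst hr1
      exact absurd hs1 (by intro h; cases h)
    · have hk12 : k1 = k2 := by
        rw [hr1] at hr2
        injection hr2 with _ h2
        exact numeral_inj h2
      subst hk12
      subst hr1; subst hs1'; subst hs2'
      by_cases hkm : k1 = m
      · exact .inr ⟨E, by rw [hkm]⟩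
      · have hb1 : (k1, b1) ∈ p := by
          have h' : (k1, b1) ∈ insert ((m : ℕ), false) p := hkb1
          rcases Finset.mem_insert.mp h' with h | h
          · exact absurd (congrArg Prod.fst h) hkm
          · exact h
        have hb2 : (k1, b2) ∈ p := by
          have h' : (k1, b2) ∈ insert ((m : ℕ), true) p := hkb2
          rcases Finset.mem_insert.mp h' with h | h
          · exact absurd (congrArg Prod.fst h) hkm
          · exact h
        have hbb : b1 = b2 := hp _ hb1 _ hb2 rfl
        subst hbb
        exact .inl ⟨rfl, Red.ctx E (Red.genRed hb1)⟩
end
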